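/- Let f be any RDRD-function of C₃ × C_m and let f_j denote the weight of column j (sum of f over the three vertices with second coordinate j, indices mod m). Then: if f_j = 0 then f_{j−1} + f_{j+1} ≥ 6; if f_j = 1 then f_{j−1} + f_{j+1} ≥ 5; if f_j = 3 then f_{j−1} + f_{j+1} ≥ 3; and if 4 ≤ f_j ≤ 5 then f_{j−1} ≥ 2 or f_{j+1} ≥ 2. -/

import Mathlib

/-!
Weight each vertex `u` by `f u - 1` (truncated). The domination conditions say exactly that a
vertex labelled 0 has neighbourhood weight at least 2 and a vertex labelled 1 at least 1. In
`C₃ × C_m` the neighbours of `(i, j)` are the vertices of columns `j ± 1` outside row `i`, so all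
four claims become linear arithmetic on the nine labels of three consecutive columns.
-/

open SimpleGraph Finset

/-- A restrained double Roman dominating function. -/
def IsRDRD {α : Type*} (G : SimpleGraph α) (f : α → ℕ) : Prop :=
  (∀ v, f v ≤ 3) ∧
  (∀ v, f v = 0 →
    (∃ u, G.Adj v u ∧ f u = 3) ∨
    (∃ u w, u ≠ w ∧ G.Adj v u ∧ G.Adj v w ∧ f u = 2 ∧ f w = 2)) ∧
  (∀ v, f v = 1 → ∃ u, G.Adj v u ∧ 2 ≤ f u) ∧
  (∀ v, f v = 0 → ∃ u, G.Adj v u ∧ f u = 0)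

/-- The restrained double Roman domination number. -/
noncomputable def gammaRdR {α : Type*} (G : SimpleGraph α) [Fintype α] : ℕ :=
  sInf {w | ∃ f, IsRDRD G f ∧ ∑ v, f v = w}

/-- The strong product of two simple graphs. -/
def strongProd {α β : Type*} (G : SimpleGraph α) (H : SimpleGraph β) :
    SimpleGraph (α × β) where
  Adj p q := p ≠ q ∧ (G.Adj p.1 q.1 ∨ p.1 = q.1) ∧ (H.Adj p.2 q.2 ∨ p.2 = q.2)
  symm := by
    refine ⟨?_⟩
    rintro p q ⟨h1, h2, h3⟩
    exact ⟨h1.symm, h2.imp (fun h => h.symm) Eq.symm, h3.imp (fun h => h.symm) Eq.symm⟩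
  loopless := by refine ⟨?_⟩; rintro p ⟨h1, _⟩; exact h1 rfl

/-- The cardinal (direct/tensor) product of two simple graphs. -/
def cardProd {α β : Type*} (G : SimpleGraph α) (H : SimpleGraph β) :
    SimpleGraph (α × β) where
  Adj p q := G.Adj p.1 q.1 ∧ H.Adj p.2 q.2
  symm := by refine ⟨?_⟩; rintro p q ⟨h1, h2⟩; exact ⟨h1.symm, h2.symm⟩
  loopless := by refine ⟨?_⟩; rintro p ⟨h1, _⟩; exact G.irrefl h1

/-- The corona of two simple graphs. -/
def corona {α β : Type*} (G : SimpleGraph α) (H : SimpleGraph β) :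
    SimpleGraph (α ⊕ α × β) where
  Adj x y :=
    match x, y with
    | .inl u, .inl v => G.Adj u v
    | .inl u, .inr (v, _) => u = v
    | .inr (v, _), .inl u => u = v
    | .inr (u, a), .inr (v, b) => u = v ∧ H.Adj a b
  symm := by
    refine ⟨?_⟩
    rintro (u | ⟨u, a⟩) (v | ⟨v, b⟩) h
    · exact h.symm
    · exact h
    · exact h
    · exact ⟨h.1.symm, h.2.symm⟩
  loopless := by
    refine ⟨?_⟩
    rintro (u | ⟨u, a⟩) h
    · exact G.irrefl h
    · exact H.irrefl h.2

namespace IsRDRD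

variable {α : Type*} {G : SimpleGraph α} {f : α → ℕ}

theorem two_sub_le_sum_of_adj_mem_range (hf : IsRDRD G f) {v : α} (hv : f v ≤ 1)
    {ι : Type*} [Fintype ι] (φ : ι → α) (hφ : ∀ u, G.Adj v u → u ∈ Set.range φ) :
    2 - f v ≤ ∑ x, (f (φ x) - 1) := by
  have hnonneg : ∀ x ∈ (univ : Finset ι), 0 ≤ f (φ x) - 1 := fun _ _ => Nat.zero_le _
  rcases Nat.le_one_iff_eq_zero_or_eq_one.1 hv with h0 | h1
  · rcases hf.2.1 v h0 with ⟨u, hu, hu3⟩ | ⟨u, w, hne, hu, hw, hu2, hw2⟩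
    · obtain ⟨x, rfl⟩ := hφ u hu
      have := single_le_sum hnonneg (mem_univ x)
      omega
    · obtain ⟨x, rfl⟩ := hφ u hu
      obtain ⟨y, rfl⟩ := hφ w hw
      have := add_le_sum hnonneg (mem_univ x) (mem_univ y) (ne_of_apply_ne φ hne)
      omega
  · obtain ⟨u, hu, hu2⟩ := hf.2.2.1 v h1
    obtain ⟨x, rfl⟩ := hφ u hu
    have := single_le_sum hnonneg (mem_univ x)
    omega

end IsRDRD

theorem cardProd_cycleGraph_adj {n : ℕ} {i r : Fin 3} {j k : Fin (n + 2)}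
    (h : (cardProd (cycleGraph 3) (cycleGraph (n + 2))).Adj (i, j) (r, k)) :
    (r = i + 1 ∨ r = i + 2) ∧ (k = j - 1 ∨ k = j + 1) := by
  obtain ⟨hr, hk⟩ := h
  refine ⟨(by decide : ∀ i r : Fin 3, (cycleGraph 3).Adj i r → r = i + 1 ∨ r = i + 2) i r hr, ?_⟩
  rwa [← mem_neighborSet, cycleGraph_neighborSet, Set.mem_insert_iff,
    Set.mem_singleton_iff] at hk

theorem IsRDRD.two_sub_le_cardProd_cycleGraph {n : ℕ} {f : Fin 3 × Fin (n + 2) → ℕ}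
    (hf : IsRDRD (cardProd (cycleGraph 3) (cycleGraph (n + 2))) f) {i : Fin 3} {j : Fin (n + 2)}
    (hv : f (i, j) ≤ 1) :
    2 - f (i, j) ≤ (f (i + 1, j - 1) - 1) + (f (i + 2, j - 1) - 1) +
      (f (i + 1, j + 1) - 1) + (f (i + 2, j + 1) - 1) := by
  have key := hf.two_sub_le_sum_of_adj_mem_range hv
    ![(i + 1, j - 1), (i + 2, j - 1), (i + 1, j + 1), (i + 2, j + 1)] ?_
  · simpa only [Fin.sum_univ_four, Matrix.cons_val] using key
  rintro ⟨r, k⟩ hadj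
  obtain ⟨rfl | rfl, rfl | rfl⟩ := cardProd_cycleGraph_adj hadj
  exacts [⟨0, rfl⟩, ⟨2, rfl⟩, ⟨1, rfl⟩, ⟨3, rfl⟩]

/- Three consecutive columns `a`, `b`, `c` of a labelling of `C₃ × C_m`: the neighbours of row
`i` of `b` are rows `i + 1` and `i + 2` of `a` and `c`. -/
theorem column_sum_bounds (a b c : Fin 3 → ℕ)
    (h : ∀ i, b i ≤ 1 →
      2 - b i ≤ (a (i + 1) - 1) + (a (i + 2) - 1) + (c (i + 1) - 1) + (c (i + 2) - 1)) :
    (∑ i, b i = 0 → 6 ≤ ∑ i, a i + ∑ i, c i) ∧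
    (∑ i, b i = 1 → 5 ≤ ∑ i, a i + ∑ i, c i) ∧
    (∑ i, b i = 3 → 3 ≤ ∑ i, a i + ∑ i, c i) ∧
    (4 ≤ ∑ i, b i → ∑ i, b i ≤ 5 → 2 ≤ ∑ i, a i ∨ 2 ≤ ∑ i, c i) := by
  have h0 := h 0
  have h1 := h 1
  have h2 := h 2
  simp only [Fin.isValue, Fin.reduceAdd] at h0 h1 h2
  simp only [Fin.sum_univ_three]
  refine ⟨?_, ?_, ?_, ?_⟩ <;> omega

theorem stmt11 (m : ℕ) (hm : 3 ≤ m)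
    (f : Fin 3 × Fin m → ℕ)
    (hf : IsRDRD (cardProd (SimpleGraph.cycleGraph 3) (SimpleGraph.cycleGraph m)) f)
    (col : Fin m → ℕ)
    (hcol : ∀ j : Fin m, col j = ∑ i : Fin 3, f (i, j)) :
    ∀ j : Fin m,
      (col j = 0 → 6 ≤ col (j - ⟨1, by omega⟩) + col (j + ⟨1, by omega⟩)) ∧
      (col j = 1 → 5 ≤ col (j - ⟨1, by omega⟩) + col (j + ⟨1, by omega⟩)) ∧
      (col j = 3 → 3 ≤ col (j - ⟨1, by omega⟩) + col (j + ⟨1, by omega⟩)) ∧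
      (4 ≤ col j → col j ≤ 5 → 2 ≤ col (j - ⟨1, by omega⟩) ∨ 2 ≤ col (j + ⟨1, by omega⟩)) := by
  obtain ⟨n, rfl⟩ : ∃ n, m = n + 2 := ⟨m - 2, by omega⟩
  intro j
  have hone : (⟨1, by omega⟩ : Fin (n + 2)) = 1 := Fin.ext (Fin.val_one n).symm
  simp only [hone, hcol]
  exact column_sum_bounds (fun i => f (i, j - 1)) (fun i => f (i, j)) (fun i => f (i, j + 1))
    fun _ hv => hf.two_sub_le_cardProd_cycleGraph hv
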